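/- arXiv:2103.13784 — 2 statements merged into one kernel-verified Lean document; each statement's English description precedes it below -/
import Mathlib

section
/- Let E, V be finite sets, A ∈ ℝ^{V×E}, b ∈ ℝ^V, l_e > 0 and u_e < 0 for all e ∈ E, and F : ℝ → ℝ nondecreasing on [0, ∞). If x̂ maximizes U(x) = ∑_{e∈E} l_e u_e x_e − ∑_{e∈E} l_e F(x_e) over {x ∈ ℝ^E : x ≥ 0, A x = b}, then there is no nonzero vector c with 0 ≤ c ≤ x̂ and A c = 0; that is, the optimal flow contains no circulation (no flow loops on cycles). -/
/-- An optimal flow for the perturbed utility route choice problem contains no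
circulation: there is no nonzero `c` with `0 ≤ c ≤ xhat` and `A c = 0`. -/
theorem optimal_flow_no_circulation {V E : Type*} [Fintype V] [Fintype E]
    (A : Matrix V E ℝ) (b : V → ℝ) (l u : E → ℝ)
    (hl : ∀ e, 0 < l e) (hu : ∀ e, u e < 0)
    (F : ℝ → ℝ) (hF : MonotoneOn F (Set.Ici 0))
    (xhat : E → ℝ) (hxhat0 : ∀ e, 0 ≤ xhat e) (hxhatb : A.mulVec xhat = b)
    (hmax : ∀ x : E → ℝ, (∀ e, 0 ≤ x e) → A.mulVec x = b →
      (∑ e, l e * u e * x e - ∑ e, l e * F (x e)) ≤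
        (∑ e, l e * u e * xhat e - ∑ e, l e * F (xhat e))) :
    ¬ ∃ c : E → ℝ, c ≠ 0 ∧ (∀ e, 0 ≤ c e ∧ c e ≤ xhat e) ∧ A.mulVec c = 0 := by
  rintro ⟨c, hc0, hcb, hcA⟩
  set x : E → ℝ := fun e => xhat e - c e with hx
  have hx0 : ∀ e, 0 ≤ x e := fun e => sub_nonneg.mpr (hcb e).2
  have hxA : A.mulVec x = b := by
    have : x = xhat - c := rfl
    rw [this, Matrix.mulVec_sub, hxhatb, hcA, sub_zero]
  have hmax' := hmax x hx0 hxA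
  -- linear part strictly increases
  have hex : ∃ e, 0 < c e := by
    by_contra h
    push_neg at h
    exact hc0 (funext fun e => le_antisymm (h e) (hcb e).1)
  obtain ⟨e₀, he₀⟩ := hex
  have hlin : ∑ e, l e * u e * xhat e < ∑ e, l e * u e * x e := by
    have : ∀ e, l e * u e * x e = l e * u e * xhat e - l e * u e * c e := by
      intro e; simp [hx]; ring
    rw [Finset.sum_congr rfl (fun e _ => this e), Finset.sum_sub_distrib]
    have hneg : ∑ e, l e * u e * c e < 0 := by
      refine Finset.sum_neg' (fun e _ => ?_) ⟨e₀, Finset.mem_univ e₀, ?_⟩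
      · exact mul_nonpos_of_nonpos_of_nonneg
          (mul_nonpos_of_nonneg_of_nonpos (hl e).le (hu e).le) (hcb e).1
      · exact mul_neg_of_neg_of_pos (mul_neg_of_pos_of_neg (hl e₀) (hu e₀)) he₀
    linarith
  have hpert : ∑ e, l e * F (x e) ≤ ∑ e, l e * F (xhat e) := by
    apply Finset.sum_le_sum
    intro e _
    exact mul_le_mul_of_nonneg_left
      (hF (Set.mem_Ici.mpr (hx0 e)) (Set.mem_Ici.mpr (hxhat0 e))
        (sub_le_self _ (hcb e).1)) (hl e).le
  linarith
end

section
/- (The regression identity.) Let B, A, C be real matrices with B Aᵀ C B Aᵀ = B Aᵀ, let l ∈ ℝ^n, let z be an n×k matrix of link characteristics and β ∈ ℝ^k, and set u = z β. Suppose x̂ and λ satisfy the reduced first-order condition B(l ∘ u) = B(l ∘ F′(x̂)) − B Aᵀ λ. Define y = (I − B Aᵀ C) B (l ∘ F′(x̂)) and w = (I − B Aᵀ C) B (l ∘ z), where l ∘ z multiplies each row of z by the corresponding entry of l. Then y = w β. -/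
/-!
Since `C` is a generalized inverse of `M = BAᵀ`, the matrix `I − MC` annihilates the range of `M`,
so applying it to the first-order condition removes the multiplier term `BAᵀλ`. What remains is
`(I − BAᵀC) B (l ∘ zβ)`, which is `wβ` by associativity.
-/

open Matrix

namespace Matrix

variable {m n o α : Type*}

theorem one_sub_mul_mulVec_mulVec_eq_zero [Fintype m] [Fintype n] [DecidableEq m] [Ring α]
    {M : Matrix m n α} {G : Matrix n m α}
    (hG : M * G * M = M) (v : n → α) : (1 - M * G) *ᵥ (M *ᵥ v) = 0 := by
  rw [mulVec_mulVec, Matrix.sub_mul, Matrix.one_mul, hG, sub_self, zero_mulVec]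

theorem of_mul_left_mulVec [Fintype o] [Semiring α] (l : n → α) (z : Matrix n o α) (β : o → α) :
    of (fun i j => l i * z i j) *ᵥ β = fun i => l i * (z *ᵥ β) i := by
  ext i
  simp only [mulVec, dotProduct, of_apply, Finset.mul_sum, mul_assoc]

end Matrix

/-- The regression identity: with `u = z β`, `y = (I − BAᵀC) B (l ∘ F′(xhat))` and
`w = (I − BAᵀC) B (l ∘ z)`, the reduced first-order condition implies `y = w β`. -/
theorem regression_identity {ι n p k : Type*}
    [Fintype ι] [Fintype n] [Fintype p] [Fintype k] [DecidableEq ι]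
    (B : Matrix ι n ℝ) (A : Matrix p n ℝ) (C : Matrix p ι ℝ)
    (hC : B * Aᵀ * C * (B * Aᵀ) = B * Aᵀ)
    (l : n → ℝ) (z : Matrix n k ℝ) (β : k → ℝ)
    (F' : ℝ → ℝ) (xhat : n → ℝ) (lam : p → ℝ)
    (hfoc : B.mulVec (fun i => l i * z.mulVec β i) =
      B.mulVec (fun i => l i * F' (xhat i)) - (B * Aᵀ).mulVec lam) :
    (1 - B * Aᵀ * C).mulVec (B.mulVec (fun i => l i * F' (xhat i))) =
      ((1 - B * Aᵀ * C) * B * Matrix.of (fun i j => l i * z i j)).mulVec β := by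
  rw [← mulVec_mulVec, ← mulVec_mulVec, of_mul_left_mulVec, hfoc, mulVec_sub,
    one_sub_mul_mulVec_mulVec_eq_zero hC, sub_zero]
end
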